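/- arXiv:1907.03321 — 3 statements merged into one kernel-verified Lean document; each statement's English description precedes it below -/
import Mathlib

section
/- Let a : [0,1] → ℝ be continuous on [0,1], continuously differentiable on (0,1], with a(x) > 0 for all x ∈ (0,1], a(0) = 0, and suppose there exists K with 0 ≤ K < 1 such that x·(deriv a)(x) ≤ K·a(x) for all x ∈ (0,1]. Then the function x ↦ 1/a(x) is Lebesgue integrable on (0,1), and ∫₀¹ 1/a(x) dx ≤ 1/(a(1)·(1−K)). -/
/-!
Under `x a'(x) ≤ K a(x)` the function `a(x) x^{-K}` is nonincreasing on `(0,1]`, so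
`a(x) ≥ a(1) x^K` there. Hence `1/a(x) ≤ x^{-K}/a(1)`, which is integrable on `(0,1)` because
`K < 1`, with `∫₀¹ x^{-K} dx = 1/(1-K)`.
-/

open Set MeasureTheory

lemma hasDerivAt_mul_rpow_neg {a : ℝ → ℝ} {K y : ℝ} (hy : 0 < y)
    (ha : DifferentiableAt ℝ a y) :
    HasDerivAt (fun x => a x * x ^ (-K)) (y ^ (-K - 1) * (y * deriv a y - K * a y)) y := by
  have hd := ha.hasDerivAt.mul (Real.hasDerivAt_rpow_const (p := -K) (Or.inl hy.ne'))
  refine hd.congr_deriv ?_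
  have hsplit : y ^ (-K) = y ^ (-K - 1) * y := by
    rw [← Real.rpow_add_one hy.ne']; ring_nf
  rw [hsplit]; ring

lemma antitoneOn_mul_rpow_neg {a : ℝ → ℝ} {K : ℝ} {s : Set ℝ} (hs : Convex ℝ s)
    (hs_pos : s ⊆ Ioi 0) (ha : ∀ x ∈ s, DifferentiableAt ℝ a x)
    (hdeg : ∀ x ∈ s, x * deriv a x ≤ K * a x) :
    AntitoneOn (fun x => a x * x ^ (-K)) s := by
  have hderiv : ∀ x ∈ s, HasDerivAt (fun x => a x * x ^ (-K))
      (x ^ (-K - 1) * (x * deriv a x - K * a x)) x :=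
    fun x hx => hasDerivAt_mul_rpow_neg (hs_pos hx) (ha x hx)
  refine antitoneOn_of_hasDerivWithinAt_nonpos hs
    (fun x hx => (hderiv x hx).continuousAt.continuousWithinAt)
    (fun x hx => (hderiv x (interior_subset hx)).hasDerivWithinAt) fun x hx => ?_
  have hxs := interior_subset hx
  exact mul_nonpos_of_nonneg_of_nonpos (Real.rpow_nonneg (hs_pos hxs).le _)
    (sub_nonpos.2 (hdeg x hxs))

lemma one_div_le_rpow_neg_div {a : ℝ → ℝ} {K : ℝ}
    (ha : ∀ x ∈ Ioc (0:ℝ) 1, DifferentiableAt ℝ a x)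
    (ha_pos : ∀ x ∈ Ioc (0:ℝ) 1, 0 < a x)
    (hdeg : ∀ x ∈ Ioc (0:ℝ) 1, x * deriv a x ≤ K * a x) {x : ℝ} (hx : x ∈ Ioc 0 1) :
    1 / a x ≤ x ^ (-K) / a 1 := by
  have h1 : (1:ℝ) ∈ Ioc (0:ℝ) 1 := right_mem_Ioc.2 one_pos
  have h_le : a 1 * 1 ^ (-K) ≤ a x * x ^ (-K) :=
    antitoneOn_mul_rpow_neg (convex_Ioc 0 1) Ioc_subset_Ioi_self ha hdeg hx h1 hx.2
  rw [div_le_div_iff₀ (ha_pos x hx) (ha_pos 1 h1)]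
  simpa [mul_comm] using h_le

lemma integral_Ioo_rpow_neg {K : ℝ} (hK : K < 1) :
    ∫ x in Ioo (0:ℝ) 1, x ^ (-K) = 1 / (1 - K) := by
  rw [← integral_Ioc_eq_integral_Ioo, ← intervalIntegral.integral_of_le zero_le_one,
    integral_rpow (Or.inl (by linarith)), Real.zero_rpow (by linarith), Real.one_rpow]
  ring_nf

theorem one_div_a_integrable_general
    (a : ℝ → ℝ) (K : ℝ)
    (ha_diff : ∀ x ∈ Ioc (0:ℝ) 1, DifferentiableAt ℝ a x)
    (ha_pos : ∀ x ∈ Ioc (0:ℝ) 1, 0 < a x)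
    (hK1 : K < 1)
    (hdeg : ∀ x ∈ Ioc (0:ℝ) 1, x * deriv a x ≤ K * a x) :
    IntegrableOn (fun x => 1 / a x) (Ioo 0 1) volume ∧
      ∫ x in Ioo (0:ℝ) 1, 1 / a x ≤ 1 / (a 1 * (1 - K)) := by
  have hbound : ∀ x ∈ Ioo (0:ℝ) 1, 1 / a x ≤ x ^ (-K) / a 1 :=
    fun x hx => one_div_le_rpow_neg_div ha_diff ha_pos hdeg (Ioo_subset_Ioc_self hx)
  have hg_int : IntegrableOn (fun x : ℝ => x ^ (-K) / a 1) (Ioo 0 1) :=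
    ((intervalIntegral.integrableOn_Ioo_rpow_iff zero_lt_one).2 (by linarith)).div_const _
  have hcont : ContinuousOn (fun x => 1 / a x) (Ioo 0 1) := fun x hx =>
    (continuousAt_const.div (ha_diff x (Ioo_subset_Ioc_self hx)).continuousAt
      (ha_pos x (Ioo_subset_Ioc_self hx)).ne').continuousWithinAt
  have hint : IntegrableOn (fun x => 1 / a x) (Ioo 0 1) := by
    refine hg_int.mono' (hcont.aestronglyMeasurable measurableSet_Ioo) ?_
    filter_upwards [ae_restrict_mem measurableSet_Ioo] with x hx
    rw [Real.norm_of_nonneg (one_div_pos.2 (ha_pos x (Ioo_subset_Ioc_self hx))).le]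
    exact hbound x hx
  refine ⟨hint, ?_⟩
  calc ∫ x in Ioo (0:ℝ) 1, 1 / a x ≤ ∫ x in Ioo (0:ℝ) 1, x ^ (-K) / a 1 :=
        setIntegral_mono_on hint hg_int measurableSet_Ioo hbound
    _ = 1 / (a 1 * (1 - K)) := by
        rw [integral_div, integral_Ioo_rpow_neg hK1, div_div, one_div, one_div, mul_comm]

/-- (WDP) If `x * a'(x) ≤ K * a(x)` on `(0,1]` with `0 ≤ K < 1`, then `1 / a`
is Lebesgue integrable on `(0,1)` and `∫₀¹ 1/a ≤ 1/(a 1 * (1 - K))`. -/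
theorem one_div_a_integrable
    (a : ℝ → ℝ) (K : ℝ)
    (ha_cont : ContinuousOn a (Icc 0 1))
    (ha_diff : ∀ x ∈ Ioc (0:ℝ) 1, DifferentiableAt ℝ a x)
    (ha_deriv_cont : ContinuousOn (deriv a) (Ioc 0 1))
    (ha_pos : ∀ x ∈ Ioc (0:ℝ) 1, 0 < a x)
    (ha0 : a 0 = 0)
    (hK0 : 0 ≤ K) (hK1 : K < 1)
    (hdeg : ∀ x ∈ Ioc (0:ℝ) 1, x * deriv a x ≤ K * a x) :
    IntegrableOn (fun x => 1 / a x) (Ioo 0 1) volume ∧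
      ∫ x in Ioo (0:ℝ) 1, 1 / a x ≤ 1 / (a 1 * (1 - K)) :=
  one_div_a_integrable_general a K ha_diff ha_pos hK1 hdeg
end

section
/- Let a : [0,1] → ℝ be continuous on [0,1], continuously differentiable on (0,1], with a(x) > 0 for all x ∈ (0,1], a(0) = 0, and suppose there exists K with 0 ≤ K < 2 such that x·(deriv a)(x) ≤ K·a(x) for all x ∈ (0,1]. Then the function τ ↦ τ/a(τ) is Lebesgue integrable on (0,1), and for every x ∈ [0,1] one has ∫₀ˣ τ/a(τ) dτ ≤ 1/(a(1)·(2−K)). -/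
/-!
Along `(0, 1]` the degeneracy condition `x a'(x) ≤ K a(x)` says exactly that `a(x) x^(-K)` is
nonincreasing, so `a(x) ≥ a(1) x^K`. Hence `τ / a(τ) ≤ τ^(1-K) / a(1)`, whose exponent exceeds
`-1` because `K < 2`; comparing with it gives integrability and the bound
`∫₀ˣ τ / a(τ) dτ ≤ x^(2-K) / ((2-K) a(1)) ≤ 1 / (a(1) (2-K))`.
-/

open Set MeasureTheory Real

section Degenerate

variable {f : ℝ → ℝ} {K b : ℝ}

theorem antitoneOn_mul_rpow_neg_of_mul_deriv_le (hf : ∀ x ∈ Ioc 0 b, DifferentiableAt ℝ f x)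
    (hdeg : ∀ x ∈ Ioo 0 b, x * deriv f x ≤ K * f x) :
    AntitoneOn (fun x => f x * x ^ (-K)) (Ioc 0 b) := by
  have hderiv : ∀ x ∈ Ioo 0 b, HasDerivAt (fun x => f x * x ^ (-K))
      (x ^ (-K - 1) * (x * deriv f x - K * f x)) x := by
    intro x hx
    refine ((hf x (Ioo_subset_Ioc_self hx)).hasDerivAt.mul
      (hasDerivAt_rpow_const (p := -K) (Or.inl hx.1.ne'))).congr_deriv ?_
    have hx0 : x ≠ 0 := hx.1.ne'
    rw [rpow_sub hx.1, rpow_one]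
    field_simp
    ring
  apply antitoneOn_of_deriv_nonpos (convex_Ioc 0 b)
  · have hfc : ContinuousOn f (Ioc 0 b) := fun x hx => (hf x hx).continuousAt.continuousWithinAt
    exact hfc.mul (continuousOn_id.rpow_const fun x hx => Or.inl hx.1.ne')
  · rw [interior_Ioc]
    exact fun x hx => (hderiv x hx).differentiableAt.differentiableWithinAt
  · rw [interior_Ioc]
    intro x hx
    rw [(hderiv x hx).deriv]
    exact mul_nonpos_of_nonneg_of_nonpos (rpow_nonneg hx.1.le _) (sub_nonpos.2 (hdeg x hx))

theorem mul_rpow_le_of_mul_deriv_le (hf : ∀ x ∈ Ioc 0 b, DifferentiableAt ℝ f x)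
    (hdeg : ∀ x ∈ Ioo 0 b, x * deriv f x ≤ K * f x) {x : ℝ} (hx : x ∈ Ioc 0 b) :
    f b * x ^ K ≤ f x * b ^ K := by
  have hb : 0 < b := hx.1.trans_le hx.2
  have h := antitoneOn_mul_rpow_neg_of_mul_deriv_le hf hdeg hx ⟨hb, le_rfl⟩ hx.2
  simp only [rpow_neg hb.le, rpow_neg hx.1.le, ← div_eq_mul_inv] at h
  exact (div_le_div_iff₀ (rpow_pos_of_pos hb K) (rpow_pos_of_pos hx.1 K)).1 h

end Degenerate

theorem div_le_rpow_div_of_mul_rpow_le {c x y K : ℝ} (hc : 0 < c) (hx : 0 < x)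
    (h : c * x ^ K ≤ y) : x / y ≤ x ^ (1 - K) / c := by
  rw [rpow_sub hx, rpow_one, div_div, mul_comm (x ^ K)]
  exact div_le_div_of_nonneg_left hx.le (mul_pos hc (rpow_pos_of_pos hx K)) h

theorem integrableOn_Ioc_of_le_rpow {g : ℝ → ℝ} {b c p : ℝ} (hp : -1 < p)
    (hg : ContinuousOn g (Ioc 0 b)) (hg0 : ∀ x ∈ Ioc 0 b, 0 ≤ g x)
    (hle : ∀ x ∈ Ioc 0 b, g x ≤ c * x ^ p) : IntegrableOn g (Ioc 0 b) := by
  refine ((intervalIntegral.intervalIntegrable_rpow' hp).const_mul c).1.mono'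
    (hg.aestronglyMeasurable measurableSet_Ioc) ?_
  rw [ae_restrict_iff' measurableSet_Ioc]
  exact ae_of_all _ fun x hx => (Real.norm_of_nonneg (hg0 x hx)).trans_le (hle x hx)

theorem id_div_a_integrable_general
    (a : ℝ → ℝ) (K : ℝ)
    (ha_diff : ∀ x ∈ Ioc (0:ℝ) 1, DifferentiableAt ℝ a x)
    (ha_pos : ∀ x ∈ Ioc (0:ℝ) 1, 0 < a x)
    (hK2 : K < 2)
    (hdeg : ∀ x ∈ Ioc (0:ℝ) 1, x * deriv a x ≤ K * a x) :
    IntegrableOn (fun τ => τ / a τ) (Ioo 0 1) volume ∧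
      ∀ x ∈ Icc (0:ℝ) 1, (∫ τ in (0:ℝ)..x, τ / a τ) ≤ 1 / (a 1 * (2 - K)) := by
  have ha1 : 0 < a 1 := ha_pos 1 ⟨one_pos, le_rfl⟩
  have hp : -1 < 1 - K := by linarith
  have h2K : 0 < 2 - K := by linarith
  have hbound : ∀ τ ∈ Ioc (0:ℝ) 1, τ / a τ ≤ (a 1)⁻¹ * τ ^ (1 - K) := fun τ hτ => by
    have h := mul_rpow_le_of_mul_deriv_le ha_diff (fun x hx => hdeg x (Ioo_subset_Ioc_self hx)) hτ
    rw [one_rpow, mul_one] at h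
    rw [inv_mul_eq_div]
    exact div_le_rpow_div_of_mul_rpow_le ha1 hτ.1 h
  have hcont : ContinuousOn (fun τ => τ / a τ) (Ioc 0 1) :=
    continuousOn_id.div (fun x hx => (ha_diff x hx).continuousAt.continuousWithinAt)
      fun τ hτ => (ha_pos τ hτ).ne'
  have hint : IntegrableOn (fun τ => τ / a τ) (Ioc 0 1) :=
    integrableOn_Ioc_of_le_rpow hp hcont (fun τ hτ => div_nonneg hτ.1.le (ha_pos τ hτ).le) hbound
  refine ⟨hint.mono_set Ioo_subset_Ioc_self, fun x hx => ?_⟩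
  calc (∫ τ in (0:ℝ)..x, τ / a τ) ≤ ∫ τ in (0:ℝ)..x, (a 1)⁻¹ * τ ^ (1 - K) :=
        intervalIntegral.integral_mono_on_of_le_Ioo hx.1
          ((intervalIntegrable_iff_integrableOn_Ioc_of_le hx.1).2
            (hint.mono_set (Ioc_subset_Ioc le_rfl hx.2)))
          ((intervalIntegral.intervalIntegrable_rpow' hp).const_mul _)
          fun τ hτ => hbound τ ⟨hτ.1, hτ.2.le.trans hx.2⟩
    _ = (a 1)⁻¹ * (x ^ (2 - K) / (2 - K)) := by
        rw [intervalIntegral.integral_const_mul, integral_rpow (Or.inl hp),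
          zero_rpow (by linarith), show 1 - K + 1 = 2 - K by ring, sub_zero]
    _ ≤ (a 1)⁻¹ * (1 / (2 - K)) := by
        gcongr
        exact rpow_le_one hx.1 hx.2 h2K.le
    _ = 1 / (a 1 * (2 - K)) := by rw [one_div, one_div, mul_inv]

/-- If `x * a'(x) ≤ K * a(x)` on `(0,1]` with `0 ≤ K < 2`, then `τ ↦ τ / a τ`
is Lebesgue integrable on `(0,1)` and `∫₀ˣ τ/a(τ) dτ ≤ 1/(a 1 * (2 - K))`
for every `x ∈ [0,1]`. -/
theorem id_div_a_integrable
    (a : ℝ → ℝ) (K : ℝ)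
    (ha_cont : ContinuousOn a (Icc 0 1))
    (ha_diff : ∀ x ∈ Ioc (0:ℝ) 1, DifferentiableAt ℝ a x)
    (ha_deriv_cont : ContinuousOn (deriv a) (Ioc 0 1))
    (ha_pos : ∀ x ∈ Ioc (0:ℝ) 1, 0 < a x)
    (ha0 : a 0 = 0)
    (hK0 : 0 ≤ K) (hK2 : K < 2)
    (hdeg : ∀ x ∈ Ioc (0:ℝ) 1, x * deriv a x ≤ K * a x) :
    IntegrableOn (fun τ => τ / a τ) (Ioo 0 1) volume ∧
      ∀ x ∈ Icc (0:ℝ) 1, (∫ τ in (0:ℝ)..x, τ / a τ) ≤ 1 / (a 1 * (2 - K)) :=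
  id_div_a_integrable_general a K ha_diff ha_pos hK2 hdeg
end

section
/- Let a : [0,1] → ℝ be continuous on [0,1], continuously differentiable on (0,1], with a(x) > 0 for all x ∈ (0,1], a(0) = 0, and suppose there exists K with 0 ≤ K < 1 such that x·(deriv a)(x) ≤ K·a(x) for all x ∈ (0,1] (so that 1/a is integrable on (0,1)). Let v : [0,1] → ℝ be absolutely continuous on [0,1] with v(1) = 0 and suppose the function x ↦ a(x)·(v'(x))² is Lebesgue integrable on (0,1). Then for every x ∈ (0,1], v(x)² ≤ (∫ₓ¹ 1/a(τ) dτ)·(∫ₓ¹ a(τ)·v'(τ)² dτ), and consequently ∫₀¹ v(x)² dx ≤ (∫₀¹ 1/a(x) dx)·(∫₀¹ a(x)·v'(x)² dx). -/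
/-!
The degeneracy condition `x a' ≤ K a` says that `a x * x ^ (-K)` is nonincreasing, so
`a x ≥ a 1 * x ^ K` and, as `K < 1`, `1 / a` is dominated by the integrable `x ^ (-K)`.
Writing `v x = -∫ₓ¹ v'` and `v' = a^{-1/2} · (a^{1/2} v')`, Cauchy–Schwarz gives the pointwise
bound; enlarging `(x,1]` to `(0,1]` and integrating over `x` gives the integral one.
-/

open Set MeasureTheory

theorem antitoneOn_mul_rpow_neg_of_mul_deriv_le_s9 {a : ℝ → ℝ} {K : ℝ} {s : Set ℝ}
    (hs : Convex ℝ s) (hs0 : s ⊆ Ioi 0) (hdiff : ∀ x ∈ s, DifferentiableAt ℝ a x)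
    (hdeg : ∀ x ∈ s, x * deriv a x ≤ K * a x) :
    AntitoneOn (fun x => a x * x ^ (-K)) s := by
  have hderiv : ∀ x ∈ s, HasDerivAt (fun x => a x * x ^ (-K))
      ((x * deriv a x - K * a x) * x ^ (-K) / x) x := by
    intro x hx
    have hx0 : x ≠ 0 := (hs0 hx).ne'
    refine ((hdiff x hx).hasDerivAt.mul
      (Real.hasDerivAt_rpow_const (p := -K) (Or.inl hx0))).congr_deriv ?_
    rw [Real.rpow_sub_one hx0]
    field_simp
    ring
  refine antitoneOn_of_deriv_nonpos hs
    (fun x hx => (hderiv x hx).continuousAt.continuousWithinAt)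
    (fun x hx => (hderiv x (interior_subset hx)).differentiableAt.differentiableWithinAt)
    (fun x hx => ?_)
  have hx := interior_subset hx
  rw [(hderiv x hx).deriv]
  have hx0 : (0 : ℝ) < x := hs0 hx
  exact div_nonpos_of_nonpos_of_nonneg
    (mul_nonpos_of_nonpos_of_nonneg (by linarith [hdeg x hx]) (by positivity)) hx0.le

theorem integrableOn_one_div_of_mul_deriv_le {a : ℝ → ℝ} {K b : ℝ} (hK : K < 1)
    (hdiff : ∀ x ∈ Ioc 0 b, DifferentiableAt ℝ a x) (hpos : ∀ x ∈ Ioc 0 b, 0 < a x)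
    (hdeg : ∀ x ∈ Ioc 0 b, x * deriv a x ≤ K * a x) :
    IntegrableOn (fun x => 1 / a x) (Ioc 0 b) := by
  rcases le_or_gt b 0 with hb | hb
  · simp [Ioc_eq_empty (not_lt.2 hb)]
  have hbmem : b ∈ Ioc 0 b := ⟨hb, le_rfl⟩
  set c := a b * b ^ (-K)
  have hc : 0 < c := mul_pos (hpos b hbmem) (by positivity)
  have hanti := antitoneOn_mul_rpow_neg_of_mul_deriv_le_s9 (convex_Ioc 0 b)
    (fun x hx => hx.1) hdiff hdeg
  have hbound : ∀ x ∈ Ioc 0 b, 1 / a x ≤ c⁻¹ * x ^ (-K) := by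
    intro x hx
    have hxK : 0 < x ^ (-K) := Real.rpow_pos_of_pos hx.1 _
    calc 1 / a x = x ^ (-K) / (a x * x ^ (-K)) := by field_simp
      _ ≤ x ^ (-K) / c := div_le_div_of_nonneg_left hxK.le hc (hanti hx hbmem hx.2)
      _ = c⁻¹ * x ^ (-K) := div_eq_inv_mul _ _
  have hrpow : IntegrableOn (fun x : ℝ => x ^ (-K)) (Ioc 0 b) :=
    (intervalIntegrable_iff_integrableOn_Ioc_of_le hb.le).1
      (intervalIntegral.intervalIntegrable_rpow' (by linarith))
  have hcont : ContinuousOn (fun x => 1 / a x) (Ioc 0 b) :=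
    continuousOn_const.div (fun x hx => (hdiff x hx).continuousAt.continuousWithinAt)
      (fun x hx => (hpos x hx).ne')
  refine (hrpow.const_mul c⁻¹).mono' (hcont.aestronglyMeasurable measurableSet_Ioc)
    (ae_restrict_of_forall_mem measurableSet_Ioc fun x hx => ?_)
  rw [Real.norm_of_nonneg (one_div_pos.2 (hpos x hx)).le]
  exact hbound x hx

theorem sq_integral_le_integral_one_div_mul_integral_mul_sq {α : Type*} [MeasurableSpace α]
    {μ : Measure α} {w f : α → ℝ} (hw : ∀ᵐ x ∂μ, 0 < w x)
    (hinv : Integrable (fun x => 1 / w x) μ) (hwf : Integrable (fun x => w x * f x ^ 2) μ) :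
    (∫ x, f x ∂μ) ^ 2 ≤ (∫ x, 1 / w x ∂μ) * ∫ x, w x * f x ^ 2 ∂μ := by
  have hF2 : (fun x => √(1 / w x) ^ 2) =ᵐ[μ] fun x => 1 / w x := by
    filter_upwards [hw] with x hx using Real.sq_sqrt (one_div_pos.2 hx).le
  have hG2 : (fun x => √(w x * f x ^ 2) ^ 2) =ᵐ[μ] fun x => w x * f x ^ 2 := by
    filter_upwards [hw] with x hx using Real.sq_sqrt (by positivity)
  have hFG : (fun x => |f x|) =ᵐ[μ] fun x => √(1 / w x) * √(w x * f x ^ 2) := by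
    filter_upwards [hw] with x hx
    rw [← Real.sqrt_mul (one_div_pos.2 hx).le, ← mul_assoc, one_div_mul_cancel hx.ne', one_mul,
      Real.sqrt_sq_eq_abs]
  have hFL2 : MemLp (fun x => √(1 / w x)) (ENNReal.ofReal 2) μ := by
    rw [ENNReal.ofReal_ofNat, memLp_two_iff_integrable_sq
      (Real.continuous_sqrt.comp_aestronglyMeasurable hinv.aestronglyMeasurable)]
    exact hinv.congr hF2.symm
  have hGL2 : MemLp (fun x => √(w x * f x ^ 2)) (ENNReal.ofReal 2) μ := by
    rw [ENNReal.ofReal_ofNat, memLp_two_iff_integrable_sq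
      (Real.continuous_sqrt.comp_aestronglyMeasurable hwf.aestronglyMeasurable)]
    exact hwf.congr hG2.symm
  have holder := integral_mul_le_Lp_mul_Lq_of_nonneg Real.HolderConjugate.two_two
    (Filter.Eventually.of_forall fun x => Real.sqrt_nonneg _)
    (Filter.Eventually.of_forall fun x => Real.sqrt_nonneg _) hFL2 hGL2
  simp only [Real.rpow_two, ← Real.sqrt_eq_rpow] at holder
  rw [integral_congr_ae hF2, integral_congr_ae hG2, ← integral_congr_ae hFG] at holder
  calc (∫ x, f x ∂μ) ^ 2 ≤ (∫ x, |f x| ∂μ) ^ 2 := by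
        rw [← sq_abs]
        exact pow_le_pow_left₀ (abs_nonneg _) abs_integral_le_integral_abs 2
    _ ≤ (√(∫ x, 1 / w x ∂μ) * √(∫ x, w x * f x ^ 2 ∂μ)) ^ 2 :=
        pow_le_pow_left₀ (integral_nonneg fun x => abs_nonneg _) holder 2
    _ = (∫ x, 1 / w x ∂μ) * ∫ x, w x * f x ^ 2 ∂μ := by
        have hA : 0 ≤ ∫ x, 1 / w x ∂μ := integral_nonneg_of_ae <| by
          filter_upwards [hw] with x hx using (one_div_pos.2 hx).le
        have hB : 0 ≤ ∫ x, w x * f x ^ 2 ∂μ := integral_nonneg_of_ae <| by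
          filter_upwards [hw] with x hx using by positivity
        rw [mul_pow, Real.sq_sqrt hA, Real.sq_sqrt hB]

theorem sq_le_setIntegral_one_div_mul_setIntegral_mul_sq {a v v' : ℝ → ℝ} {x b : ℝ}
    (hxb : x ≤ b) (hpos : ∀ y ∈ Ioc x b, 0 < a y)
    (hinv : IntegrableOn (fun y => 1 / a y) (Ioc x b))
    (hav : IntegrableOn (fun y => a y * v' y ^ 2) (Ioc x b))
    (hFTC : v b - v x = ∫ t in x..b, v' t) (hvb : v b = 0) :
    v x ^ 2 ≤ (∫ y in Ioc x b, 1 / a y) * ∫ y in Ioc x b, a y * v' y ^ 2 := by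
  have hvx : v x = -∫ t in Ioc x b, v' t := by
    rw [← intervalIntegral.integral_of_le hxb, ← hFTC, hvb]
    ring
  rw [hvx, neg_sq]
  exact sq_integral_le_integral_one_div_mul_integral_mul_sq
    (ae_restrict_of_forall_mem measurableSet_Ioc hpos) hinv hav

theorem weighted_poincare_general
    (a v v' : ℝ → ℝ) (K : ℝ)
    (ha_diff : ∀ x ∈ Ioc (0:ℝ) 1, DifferentiableAt ℝ a x)
    (ha_pos : ∀ x ∈ Ioc (0:ℝ) 1, 0 < a x)
    (hK1 : K < 1)
    (hdeg : ∀ x ∈ Ioc (0:ℝ) 1, x * deriv a x ≤ K * a x)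
    (hFTC : ∀ x ∈ Icc (0:ℝ) 1, v 1 - v x = ∫ t in x..(1:ℝ), v' t)
    (hv1 : v 1 = 0)
    (hav' : IntegrableOn (fun x => a x * v' x ^ 2) (Ioo 0 1) volume) :
    (∀ x ∈ Ioc (0:ℝ) 1,
        v x ^ 2 ≤ (∫ τ in Ioc x 1, 1 / a τ) * ∫ τ in Ioc x 1, a τ * v' τ ^ 2) ∧
      ∫ x in Ioo (0:ℝ) 1, v x ^ 2 ≤
        (∫ x in Ioo (0:ℝ) 1, 1 / a x) * ∫ x in Ioo (0:ℝ) 1, a x * v' x ^ 2 := by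
  have hinv : IntegrableOn (fun x => 1 / a x) (Ioc 0 1) :=
    integrableOn_one_div_of_mul_deriv_le hK1 ha_diff ha_pos hdeg
  have hav : IntegrableOn (fun x => a x * v' x ^ 2) (Ioc 0 1) :=
    (integrableOn_Ioc_iff_integrableOn_Ioo).2 hav'
  have hinv0 : ∀ x ∈ Ioc (0:ℝ) 1, 0 ≤ 1 / a x := fun x hx => (one_div_pos.2 (ha_pos x hx)).le
  have hav0 : ∀ x ∈ Ioc (0:ℝ) 1, 0 ≤ a x * v' x ^ 2 := fun x hx =>
    mul_nonneg (ha_pos x hx).le (sq_nonneg _)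
  have hsub : ∀ x ∈ Ioc (0:ℝ) 1, Ioc x 1 ⊆ Ioc 0 1 := fun x hx => Ioc_subset_Ioc_left hx.1.le
  have pointwise : ∀ x ∈ Ioc (0:ℝ) 1,
      v x ^ 2 ≤ (∫ τ in Ioc x 1, 1 / a τ) * ∫ τ in Ioc x 1, a τ * v' τ ^ 2 :=
    fun x hx => sq_le_setIntegral_one_div_mul_setIntegral_mul_sq hx.2
      (fun y hy => ha_pos y (hsub x hx hy)) (hinv.mono_set (hsub x hx)) (hav.mono_set (hsub x hx))
      (hFTC x (Ioc_subset_Icc_self hx)) hv1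
  refine ⟨pointwise, ?_⟩
  simp only [← integral_Ioc_eq_integral_Ioo]
  have hbound : ∀ x ∈ Ioc (0:ℝ) 1,
      v x ^ 2 ≤ (∫ x in Ioc 0 1, 1 / a x) * ∫ x in Ioc 0 1, a x * v' x ^ 2 := fun x hx =>
    (pointwise x hx).trans <| mul_le_mul
      (setIntegral_mono_set hinv (ae_restrict_of_forall_mem measurableSet_Ioc hinv0)
        (hsub x hx).eventuallyLE)
      (setIntegral_mono_set hav (ae_restrict_of_forall_mem measurableSet_Ioc hav0)
        (hsub x hx).eventuallyLE)
      (setIntegral_nonneg measurableSet_Ioc fun y hy => hav0 y (hsub x hx hy))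
      (setIntegral_nonneg measurableSet_Ioc hinv0)
  calc ∫ x in Ioc 0 1, v x ^ 2
      ≤ ∫ _ in Ioc (0:ℝ) 1, (∫ x in Ioc 0 1, 1 / a x) * ∫ x in Ioc 0 1, a x * v' x ^ 2 :=
        integral_mono_of_nonneg (Filter.Eventually.of_forall fun x => sq_nonneg _)
          (integrable_const _) (ae_restrict_of_forall_mem measurableSet_Ioc hbound)
    _ = (∫ x in Ioc 0 1, 1 / a x) * ∫ x in Ioc 0 1, a x * v' x ^ 2 := by simp

/-- Hardy–Poincaré type inequality: under the weak degeneracy condition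
(`0 ≤ K < 1`), for an absolutely continuous `v` on `[0,1]` with derivative
`v'`, `v 1 = 0` and `a * v'²` integrable on `(0,1)`, one has
`v(x)² ≤ (∫ₓ¹ 1/a)(∫ₓ¹ a v'²)` on `(0,1]` and hence
`∫₀¹ v² ≤ (∫₀¹ 1/a)(∫₀¹ a v'²)`. -/
theorem weighted_poincare
    (a v v' : ℝ → ℝ) (K : ℝ)
    (ha_cont : ContinuousOn a (Icc 0 1))
    (ha_diff : ∀ x ∈ Ioc (0:ℝ) 1, DifferentiableAt ℝ a x)
    (ha_deriv_cont : ContinuousOn (deriv a) (Ioc 0 1))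
    (ha_pos : ∀ x ∈ Ioc (0:ℝ) 1, 0 < a x)
    (ha0 : a 0 = 0)
    (hK0 : 0 ≤ K) (hK1 : K < 1)
    (hdeg : ∀ x ∈ Ioc (0:ℝ) 1, x * deriv a x ≤ K * a x)
    (hv'int : IntegrableOn v' (Icc 0 1) volume)
    (hFTC : ∀ x ∈ Icc (0:ℝ) 1, v 1 - v x = ∫ t in x..(1:ℝ), v' t)
    (hv1 : v 1 = 0)
    (hav' : IntegrableOn (fun x => a x * v' x ^ 2) (Ioo 0 1) volume) :
    (∀ x ∈ Ioc (0:ℝ) 1,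
        v x ^ 2 ≤ (∫ τ in Ioc x 1, 1 / a τ) * ∫ τ in Ioc x 1, a τ * v' τ ^ 2) ∧
      ∫ x in Ioo (0:ℝ) 1, v x ^ 2 ≤
        (∫ x in Ioo (0:ℝ) 1, 1 / a x) * ∫ x in Ioo (0:ℝ) 1, a x * v' x ^ 2 :=
  weighted_poincare_general a v v' K ha_diff ha_pos hK1 hdeg hFTC hv1 hav'
end
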